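/- For every integer p ≥ 2, the split graph Q₁(p) satisfies χ_rlid(Q₁(p)) = p + 1 = log₂(ω(Q₁(p))) + 2; in particular ω(Q₁(p)) = 2^(p−1), so the lower bound log₂(ω) + 2 ≤ χ_rlid for twin-free connected split graphs is tight. -/
import Mathlib


open SimpleGraph Set

variable {V : Type*}

/-- The closed neighborhood of a vertex. -/
def closedNbhd (G : SimpleGraph V) (v : V) : Set V := insert v (G.neighborSet v)

/-- A (not necessarily proper) coloring `c : V → Fin k` is a relaxed locally identifying coloring
(rlid-coloring) if any two adjacent vertices with distinct closed neighborhoods receive distinct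
sets of colors on their closed neighborhoods. -/
def IsRlidColoring (G : SimpleGraph V) {k : ℕ} (c : V → Fin k) : Prop :=
  ∀ u v : V, G.Adj u v → closedNbhd G u ≠ closedNbhd G v →
    c '' closedNbhd G u ≠ c '' closedNbhd G v

/-- The relaxed locally identifying chromatic number: the least `k` such that `G` admits an
rlid-coloring with `k` colors. -/
noncomputable def rlidChromNum (G : SimpleGraph V) : ℕ :=
  sInf {k : ℕ | ∃ c : V → Fin k, IsRlidColoring G c}

/-- A graph is twin-free if distinct vertices have distinct closed neighborhoods. -/
def TwinFree (G : SimpleGraph V) : Prop :=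
  ∀ u v : V, closedNbhd G u = closedNbhd G v → u = v

/-- The split graph `Q₁(p)`: the clique is `{x_Q : Q ⊆ {1,…,p−1}}` (size `2^(p−1)`, encoded as
`Sum.inl Q`), the independent set is `{s_1, …, s_{p−1}}` (encoded as `Sum.inr i`), and `x_Q` is
adjacent to `s_i` iff `i ∈ Q`. -/
def Q1graph (p : ℕ) : SimpleGraph (Finset (Fin (p - 1)) ⊕ Fin (p - 1)) :=
  SimpleGraph.fromRel (fun x y =>
    match x, y with
    | Sum.inl Q, Sum.inl Q' => Q ≠ Q'
    | Sum.inl Q, Sum.inr i => i ∈ Q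
    | _, _ => False)

lemma adj_ll {p : ℕ} (Q Q' : Finset (Fin (p-1))) : (Q1graph p).Adj (.inl Q) (.inl Q') ↔ Q ≠ Q' := by
  simp [Q1graph]; tauto
lemma adj_lr {p : ℕ} (Q : Finset (Fin (p-1))) (i : Fin (p-1)) : (Q1graph p).Adj (.inl Q) (.inr i) ↔ i ∈ Q := by
  simp [Q1graph]
lemma adj_rl {p : ℕ} (Q : Finset (Fin (p-1))) (i : Fin (p-1)) : (Q1graph p).Adj (.inr i) (.inl Q) ↔ i ∈ Q := by
  simp [Q1graph]
lemma adj_rr {p : ℕ} (i j : Fin (p-1)) : ¬ (Q1graph p).Adj (.inr i) (.inr j) := by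
  simp [Q1graph]

lemma mem_closedNbhd {G : SimpleGraph V} {u v : V} : v ∈ closedNbhd G u ↔ v = u ∨ G.Adj u v := by
  simp [closedNbhd]

lemma cn_inl {p : ℕ} (Q : Finset (Fin (p-1))) :
    closedNbhd (Q1graph p) (Sum.inl Q) = Set.range Sum.inl ∪ Sum.inr '' ↑Q := by
  ext v
  rcases v with Q' | i
  · simp [mem_closedNbhd, adj_ll]; tauto
  · simp [mem_closedNbhd, adj_lr]

lemma cn_inr {p : ℕ} (i : Fin (p-1)) :
    closedNbhd (Q1graph p) (Sum.inr i) = Sum.inl '' {Q | i ∈ Q} ∪ {Sum.inr i} := by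
  ext v
  rcases v with Q' | j
  · simp [mem_closedNbhd, adj_rl]
  · simp [mem_closedNbhd, adj_rr, eq_comm]

lemma cn_ll_ne {p : ℕ} {Q Q' : Finset (Fin (p-1))} (h : Q ≠ Q') :
    closedNbhd (Q1graph p) (Sum.inl Q) ≠ closedNbhd (Q1graph p) (Sum.inl Q') := by
  intro he
  obtain ⟨i, hi⟩ : ∃ i, ¬ (i ∈ Q ↔ i ∈ Q') := by
    by_contra hc; push_neg at hc; exact h (Finset.ext fun i => hc i)
  have := congrArg (Sum.inr i ∈ ·) he
  simp [cn_inl] at this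
  exact hi this

lemma cn_lr_ne {p : ℕ} (Q : Finset (Fin (p-1))) (i : Fin (p-1)) :
    closedNbhd (Q1graph p) (Sum.inl Q) ≠ closedNbhd (Q1graph p) (Sum.inr i) := by
  intro he
  have := congrArg (Sum.inl (∅ : Finset (Fin (p-1))) ∈ ·) he
  simp [cn_inl, cn_inr] at this

lemma image_cn_inl {p : ℕ} {k : ℕ} (c : Finset (Fin (p - 1)) ⊕ Fin (p - 1) → Fin k)
    (Q : Finset (Fin (p-1))) :
    c '' closedNbhd (Q1graph p) (Sum.inl Q) = Set.range (c ∘ Sum.inl) ∪ (c ∘ Sum.inr) '' ↑Q := by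
  rw [cn_inl, Set.image_union, ← Set.range_comp, Set.image_image]
  rfl

lemma image_cn_inr {p : ℕ} {k : ℕ} (c : Finset (Fin (p - 1)) ⊕ Fin (p - 1) → Fin k)
    (i : Fin (p-1)) :
    c '' closedNbhd (Q1graph p) (Sum.inr i) = (c ∘ Sum.inl) '' {Q | i ∈ Q} ∪ {c (Sum.inr i)} := by
  rw [cn_inr, Set.image_union, Set.image_image, Set.image_singleton]
  rfl





/-- the coloring witnessing the upper bound -/
def goodCol (p : ℕ) (hp : 2 ≤ p) : Finset (Fin (p - 1)) ⊕ Fin (p - 1) → Fin (p + 1) :=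
  fun v => match v with
  | Sum.inl Q => if Q = ∅ then ⟨p, by omega⟩ else ⟨0, by omega⟩
  | Sum.inr i => ⟨i.1 + 1, by omega⟩

lemma goodCol_neq {p : ℕ} (hp : 2 ≤ p) {Q Q' : Finset (Fin (p-1))} {i : Fin (p-1)}
    (hi : i ∈ Q) (hi' : i ∉ Q') :
    goodCol p hp '' closedNbhd (Q1graph p) (Sum.inl Q) ≠
      goodCol p hp '' closedNbhd (Q1graph p) (Sum.inl Q') := by
  intro he
  rw [image_cn_inl, image_cn_inl] at he
  have hmem : (⟨i.1 + 1, by omega⟩ : Fin (p+1)) ∈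
      Set.range (goodCol p hp ∘ Sum.inl) ∪ (goodCol p hp ∘ Sum.inr) '' ↑Q := by
    right; exact ⟨i, hi, rfl⟩
  rw [he] at hmem
  rcases hmem with ⟨Q'', hQ''⟩ | ⟨j, hj, hj2⟩
  · have := i.2
    simp only [goodCol, Function.comp] at hQ''
    split at hQ'' <;> (apply congrArg Fin.val at hQ''; simp at hQ''; try omega)
  · simp only [goodCol, Function.comp] at hj2
    apply congrArg Fin.val at hj2; simp at hj2
    exact hi' (by rwa [show j = i from Fin.ext hj2] at hj)

lemma goodCol_isRlid {p : ℕ} (hp : 2 ≤ p) : IsRlidColoring (Q1graph p) (goodCol p hp) := by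
  have key : ∀ (Q : Finset (Fin (p-1))) (i : Fin (p-1)),
      goodCol p hp '' closedNbhd (Q1graph p) (Sum.inl Q) ≠
        goodCol p hp '' closedNbhd (Q1graph p) (Sum.inr i) := by
    intro Q i he
    rw [image_cn_inl, image_cn_inr] at he
    have hmem : (⟨p, by omega⟩ : Fin (p+1)) ∈
        Set.range (goodCol p hp ∘ Sum.inl) ∪ (goodCol p hp ∘ Sum.inr) '' ↑Q := by
      left; exact ⟨∅, by simp [goodCol]⟩
    rw [he] at hmem
    rcases hmem with ⟨Q'', hQ'', h2⟩ | h2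
    · simp only [goodCol, Function.comp] at h2
      split at h2
      · rename_i h3; subst h3; simp at hQ''
      · apply congrArg Fin.val at h2; simp at h2; omega
    · simp only [goodCol, Set.mem_singleton_iff] at h2
      apply congrArg Fin.val at h2
      have := i.2
      simp at h2; omega
  intro u v hadj hne
  rcases u with Q | i <;> rcases v with Q' | i'
  · rw [adj_ll] at hadj
    obtain ⟨i, hi⟩ : ∃ i, ¬ (i ∈ Q ↔ i ∈ Q') := by
      by_contra hc; push_neg at hc; exact hadj (Finset.ext fun i => hc i)
    rw [not_iff] at hi
    by_cases h : i ∈ Q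
    · exact goodCol_neq hp h (by tauto)
    · exact fun he => goodCol_neq hp (hi.mp h) h he.symm
  · exact key Q i'
  · exact fun he => key Q' i he.symm
  · exact absurd hadj (adj_rr i i')



lemma no_small_rlid {p : ℕ} (hp : 2 ≤ p) (c : Finset (Fin (p - 1)) ⊕ Fin (p - 1) → Fin p) :
    ¬ IsRlidColoring (Q1graph p) c := by
  intro hc
  classical
  set C : Finset (Fin p) := Finset.univ.image (c ∘ Sum.inl) with hC
  set F : Finset (Fin (p-1)) → Finset (Fin p) :=
    fun Q => C ∪ Q.image (c ∘ Sum.inr) with hF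
  -- F Q coincides with the image of the closed neighborhood of inl Q
  have hFcoe : ∀ Q, (F Q : Set (Fin p)) = c '' closedNbhd (Q1graph p) (Sum.inl Q) := by
    intro Q
    rw [image_cn_inl]
    simp only [hF, hC, Finset.coe_union, Finset.coe_image, Finset.coe_univ, Set.image_univ]
  have hFinj : Function.Injective F := by
    intro Q Q' h
    by_contra hne
    exact hc _ _ ((adj_ll Q Q').mpr hne) (cn_ll_ne hne)
      (by rw [← hFcoe, ← hFcoe, h])
  have hCF : ∀ Q, C ⊆ F Q := fun Q => Finset.subset_union_left
  -- counting
  have hinj2 : Function.Injective (fun Q => F Q \ C) := by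
    intro Q Q' h
    apply hFinj
    have h1 : F Q = (F Q \ C) ∪ C := by
      rw [Finset.sdiff_union_self_eq_union, Finset.union_eq_left.mpr (hCF Q)]
    have h2 : F Q' = (F Q' \ C) ∪ C := by
      rw [Finset.sdiff_union_self_eq_union, Finset.union_eq_left.mpr (hCF Q')]
    have h' : F Q \ C = F Q' \ C := h
    rw [h1, h2, h']
  have hcard : 2 ^ (p - 1) ≤ 2 ^ (p - C.card) := by
    have h1 : (Finset.univ : Finset (Finset (Fin (p-1)))).card ≤ (Cᶜ.powerset).card := by
      apply Finset.card_le_card_of_injOn (fun Q => F Q \ C)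
      · intro Q _
        refine Finset.mem_powerset.mpr (fun x hx => ?_)
        simp only [Finset.mem_sdiff] at hx
        simp [Finset.mem_compl, hx.2]
      · intro Q _ Q' _ h
        exact hinj2 h
    rw [Finset.card_univ, Fintype.card_finset, Fintype.card_fin, Finset.card_powerset,
      Finset.card_compl, Fintype.card_fin] at h1
    exact h1
  have hCcard : C.card ≤ 1 := by
    have := (Nat.pow_le_pow_iff_right (by norm_num : 1 < 2)).mp hcard
    have hC1 : C.Nonempty := ⟨c (Sum.inl ∅), Finset.mem_image.mpr ⟨∅, Finset.mem_univ _, rfl⟩⟩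
    have := Finset.card_le_univ C
    simp [Fintype.card_fin] at this
    omega
  have hC1 : C.card = 1 := le_antisymm hCcard
    (Finset.card_pos.mpr ⟨c (Sum.inl ∅), Finset.mem_image.mpr ⟨∅, Finset.mem_univ _, rfl⟩⟩)
  obtain ⟨a, ha⟩ := Finset.card_eq_one.mp hC1
  have hall : ∀ Q, c (Sum.inl Q) = a := by
    intro Q
    have : c (Sum.inl Q) ∈ C := Finset.mem_image.mpr ⟨Q, Finset.mem_univ _, rfl⟩
    rw [ha] at this; exact Finset.mem_singleton.mp this
  -- the contradiction at vertex pair (inl {i}, inr i)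
  have hi : (0 : ℕ) < p - 1 := by omega
  set i : Fin (p-1) := ⟨0, hi⟩
  apply hc (Sum.inl {i}) (Sum.inr i) ((adj_lr _ _).mpr (Finset.mem_singleton_self i))
    (cn_lr_ne _ _)
  rw [image_cn_inl, image_cn_inr]
  have h1 : Set.range (c ∘ Sum.inl) = {a} := by
    ext x; simp [hall, eq_comm]
  have h2 : (c ∘ Sum.inl) '' {Q | i ∈ Q} = {a} := by
    ext x
    simp only [Set.mem_image, Function.comp, Set.mem_setOf_eq, Set.mem_singleton_iff]
    constructor
    · rintro ⟨Q, _, rfl⟩; exact hall Q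
    · rintro rfl; exact ⟨{i}, Finset.mem_singleton_self i, hall _⟩
  rw [h1, h2]
  simp [Set.union_comm]


lemma cliqueNum_Q1 (p : ℕ) : (Q1graph p).cliqueNum = 2 ^ (p - 1) := by
  classical
  apply le_antisymm
  · obtain ⟨s, hs⟩ := (Q1graph p).exists_isNClique_cliqueNum
    rw [← hs.card_eq]
    set φ : Finset (Fin (p - 1)) ⊕ Fin (p - 1) → Finset (Fin (p-1)) :=
      fun v => match v with
      | Sum.inl Q => Q
      | Sum.inr i => {i}ᶜ with hφ
    have hinj : Set.InjOn φ ↑s := by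
      intro u hu v hv huv
      rcases u with Q | i <;> rcases v with Q' | j
      · simpa [hφ] using huv
      · exfalso
        simp only [hφ] at huv
        subst huv
        have hne : (Sum.inl ({j}ᶜ : Finset (Fin (p-1))) : Finset (Fin (p-1)) ⊕ Fin (p-1)) ≠ Sum.inr j := by simp
        have := hs.isClique hu hv hne
        rw [adj_lr] at this
        simp at this
      · exfalso
        simp only [hφ] at huv
        subst huv
        have hne : (Sum.inr i : Finset (Fin (p-1)) ⊕ Fin (p-1)) ≠ Sum.inl ({i}ᶜ) := by simp
        have := hs.isClique hu hv hne
        rw [adj_rl] at this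
        simp at this
      · simp only [hφ] at huv
        have : i = j := by
          have := congrArg (fun X => Xᶜ) huv
          simpa using this
        rw [this]
    calc s.card = (s.image φ).card := (Finset.card_image_of_injOn hinj).symm
      _ ≤ Fintype.card (Finset (Fin (p-1))) := Finset.card_le_univ _
      _ = 2 ^ (p-1) := by rw [Fintype.card_finset, Fintype.card_fin]
  · have hclique : (Q1graph p).IsClique
        ↑(Finset.univ.map ⟨Sum.inl, Sum.inl_injective⟩ :
          Finset (Finset (Fin (p - 1)) ⊕ Fin (p - 1))) := by
      intro u hu v hv hne
      simp only [Finset.coe_map, Set.mem_image, Finset.mem_coe, Function.Embedding.coeFn_mk,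
        Finset.coe_univ, Set.image_univ, Set.mem_range] at hu hv
      obtain ⟨Q, rfl⟩ := hu
      obtain ⟨Q', rfl⟩ := hv
      exact (adj_ll Q Q').mpr (fun h => hne (by rw [h]))
    have := hclique.card_le_cliqueNum
    rwa [Finset.card_map, Finset.card_univ, Fintype.card_finset, Fintype.card_fin] at this

lemma rlid_comp_injective {V : Type*} {G : SimpleGraph V} {k m : ℕ} (c : V → Fin k)
    (g : Fin k → Fin m) (hg : Function.Injective g) (hc : IsRlidColoring G c) :
    IsRlidColoring G (g ∘ c) := by
  intro u v hadj hne he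
  apply hc u v hadj hne
  rw [Set.image_comp, Set.image_comp] at he
  exact Set.image_injective.mpr hg he

/-- For every `p ≥ 2`, `χ_rlid(Q₁(p)) = p + 1 = log₂(ω(Q₁(p))) + 2`, with
`ω(Q₁(p)) = 2^(p−1)`: the lower bound `log₂(ω) + 2 ≤ χ_rlid` for twin-free connected split
graphs is tight. -/
theorem rlid_Q1 (p : ℕ) (hp : 2 ≤ p) :
    rlidChromNum (Q1graph p) = p + 1 ∧ (Q1graph p).cliqueNum = 2 ^ (p - 1) := by
  refine ⟨?_, cliqueNum_Q1 p⟩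
  have hmem : (p + 1) ∈ {k : ℕ | ∃ c : Finset (Fin (p - 1)) ⊕ Fin (p - 1) → Fin k,
      IsRlidColoring (Q1graph p) c} := ⟨goodCol p hp, goodCol_isRlid hp⟩
  apply le_antisymm
  · exact Nat.sInf_le hmem
  · apply le_csInf ⟨p + 1, hmem⟩
    rintro k ⟨c, hc⟩
    by_contra hlt
    push_neg at hlt
    have hk : k ≤ p := by omega
    exact no_small_rlid hp (Fin.castLE hk ∘ c)
      (rlid_comp_injective c (Fin.castLE hk) (Fin.castLE_injective hk) hc)
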